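/- arXiv:2305.01339 — 6 statements merged into one kernel-verified Lean document; each statement's English description precedes it below -/
import Mathlib

section
/- In a fair division instance with n agents, m divisible goods, additive valuations v_a, sizes s_a, and budgets B_a, suppose a feasible fractional allocation x = (x_1,...,x_n) satisfies the density domination property: there exist integer thresholds τ_a such that (i) for each agent a and each good g among a's (τ_a - 1) most dense goods (density ρ_a(g) = v_a(g)/s_a(g)), x_{a,g} ≥ x_{b,g} for all agents b; (ii) each agent's budget constraint is tight, s_a(x_a) = B_a, and x_a is supported on a's τ_a most dense goods; (iii) every good internal to some agent is fully allocated among the agents. Then x is feasibly envy-free: for every pair of agents a, b and every fractional assignment y ≤ x_b with s_a(y) ≤ B_a, we have v_a(x_a) ≥ v_a(y), and similarly no agent envies any feasible fraction of the charity (unallocated portions). -/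
open Finset
open scoped BigOperators Classical

/-- Rank of good `g` in agent's density ordering (number of goods strictly denser,
ties broken by index). -/
noncomputable def densityRank {m : ℕ} (ρ : Fin m → ℝ) (g : Fin m) : ℕ :=
  (Finset.univ.filter (fun h => ρ h > ρ g ∨ (ρ h = ρ g ∧ h < g))).card

/-- The `t − 1` most dense goods (internal goods). -/
noncomputable def internalSet {m : ℕ} (ρ : Fin m → ℝ) (t : ℕ) : Finset (Fin m) :=
  Finset.univ.filter (fun g => densityRank ρ g + 1 < t)

/-- The edge good (the `t`-th most dense good), as a set. -/
noncomputable def edgeSet {m : ℕ} (ρ : Fin m → ℝ) (t : ℕ) : Finset (Fin m) :=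
  Finset.univ.filter (fun g => densityRank ρ g + 1 = t)

namespace DDaux

variable {m : ℕ} (ρ : Fin m → ℝ)

/-- `dr ρ a b` : `a` comes strictly before `b` in the density order. -/
def dr (a b : Fin m) : Prop := ρ a > ρ b ∨ (ρ a = ρ b ∧ a < b)

lemma dr_irrefl (a : Fin m) : ¬ dr ρ a a := by
  rintro (h | ⟨_, h⟩) <;> exact lt_irrefl _ h

lemma dr_trans {a b c : Fin m} (h1 : dr ρ a b) (h2 : dr ρ b c) : dr ρ a c := by
  rcases h1 with h1 | ⟨h1, h1'⟩ <;> rcases h2 with h2 | ⟨h2, h2'⟩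
  · exact Or.inl (h2.trans h1)
  · exact Or.inl (h2 ▸ h1)
  · exact Or.inl (by rwa [h1])
  · exact Or.inr ⟨h1.trans h2, h1'.trans h2'⟩

lemma dr_total {a b : Fin m} (h : a ≠ b) : dr ρ a b ∨ dr ρ b a := by
  rcases lt_trichotomy (ρ a) (ρ b) with h1 | h1 | h1
  · exact Or.inr (Or.inl h1)
  · rcases h.lt_or_gt with h2 | h2
    · exact Or.inl (Or.inr ⟨h1, h2⟩)
    · exact Or.inr (Or.inr ⟨h1.symm, h2⟩)
  · exact Or.inl (Or.inl h1)

lemma rank_eq (g : Fin m) :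
    densityRank ρ g = (Finset.univ.filter (fun h => dr ρ h g)).card := by
  simp only [densityRank, dr]
  convert rfl
  ext; simp

lemma rank_lt_of_dr {a b : Fin m} (h : dr ρ a b) :
    densityRank ρ a < densityRank ρ b := by
  rw [rank_eq, rank_eq]
  apply Finset.card_lt_card
  rw [Finset.ssubset_iff_of_subset]
  · exact ⟨a, by simpa using h, by simpa using dr_irrefl ρ a⟩
  · intro h' hh'
    simp only [Finset.mem_filter, Finset.mem_univ, true_and] at hh' ⊢
    exact dr_trans ρ hh' h

lemma dr_of_rank_lt {a b : Fin m} (h : densityRank ρ a < densityRank ρ b) :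
    dr ρ a b := by
  rcases eq_or_ne a b with rfl | hne
  · exact absurd h (lt_irrefl _)
  rcases dr_total ρ hne with h' | h'
  · exact h'
  · exact absurd (rank_lt_of_dr ρ h') (by omega)

lemma rank_injective : Function.Injective (densityRank ρ) := by
  intro a b hab
  by_contra hne
  rcases dr_total ρ hne with h | h
  · exact absurd (rank_lt_of_dr ρ h) (by omega)
  · exact absurd (rank_lt_of_dr ρ h) (by omega)

lemma rank_lt (g : Fin m) : densityRank ρ g < m := by
  have h : (Finset.univ.filter (fun h => dr ρ h g)) ⊂ Finset.univ := by
    rw [Finset.ssubset_iff_of_subset (Finset.subset_univ _)]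
    exact ⟨g, Finset.mem_univ g, by simpa using dr_irrefl ρ g⟩
  have := Finset.card_lt_card h
  simpa [rank_eq] using this

lemma exists_edge {t : ℕ} (h1 : 1 ≤ t) (h2 : t ≤ m) :
    ∃ e : Fin m, densityRank ρ e + 1 = t := by
  have hm : 0 < m := lt_of_lt_of_le h1 h2
  have hsurj : Function.Surjective (fun g : Fin m => (⟨densityRank ρ g, rank_lt ρ g⟩ : Fin m)) := by
    apply Finite.surjective_of_injective
    intro a b hab
    exact rank_injective ρ (by simpa using congrArg Fin.val hab)
  obtain ⟨e, he⟩ := hsurj ⟨t - 1, by omega⟩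
  refine ⟨e, ?_⟩
  have := congrArg Fin.val he
  simp at this
  omega

/-- Key exchange lemma, for a single agent. -/
lemma key {m : ℕ} (v s : Fin m → ℝ) (hv : ∀ g, 0 ≤ v g) (hs : ∀ g, 0 < s g)
    (xa y : Fin m → ℝ) (hxa : ∀ g, 0 ≤ xa g) (hy : ∀ g, 0 ≤ y g) (t : ℕ)
    (hI : ∀ g ∈ internalSet (fun h => v h / s h) t, y g ≤ xa g)
    (hsupp : ∀ g, xa g ≠ 0 →
      g ∈ internalSet (fun h => v h / s h) t ∪ edgeSet (fun h => v h / s h) t)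
    (hbud : ∑ g, y g * s g ≤ ∑ g, xa g * s g) :
    ∑ g, y g * v g ≤ ∑ g, xa g * v g := by
  set ρ : Fin m → ℝ := fun h => v h / s h with hρ
  by_cases hE : (edgeSet ρ t).Nonempty
  · -- there is an edge good e
    obtain ⟨e, heE⟩ := hE
    have he : densityRank ρ e + 1 = t := by
      simpa [edgeSet] using heE
    have hρe : 0 ≤ ρ e := div_nonneg (hv e) (hs e).le
    have hmain : ∀ g ∈ Finset.univ,
        ρ e * ((xa g - y g) * s g) ≤ (xa g - y g) * v g := by
      intro g _
      by_cases hgI : g ∈ internalSet ρ t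
      · -- internal: xa g ≥ y g and ρ g ≥ ρ e
        have hyx : y g ≤ xa g := hI g hgI
        have hrk : densityRank ρ g < densityRank ρ e := by
          have := (Finset.mem_filter.mp hgI).2
          omega
        have hdr : dr ρ g e := dr_of_rank_lt ρ hrk
        have hρle : ρ e ≤ ρ g := by
          rcases hdr with h | ⟨h, _⟩
          · exact le_of_lt h
          · exact le_of_eq h.symm
        have h1 : ρ e * s g ≤ v g := by
          have := (le_div_iff₀ (hs g)).mp hρle
          simpa [hρ] using this
        have h2 := mul_le_mul_of_nonneg_left h1 (sub_nonneg.mpr hyx)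
        nlinarith [h2]
      · by_cases hgE : g ∈ edgeSet ρ t
        · -- edge: g = e
          have hg : densityRank ρ g + 1 = t := by simpa [edgeSet] using hgE
          have : g = e := rank_injective ρ (by omega)
          subst this
          have hse : s g ≠ 0 := (hs g).ne'
          have hveq : ρ g * s g = v g := by
            simp only [hρ]
            field_simp
          have : (xa g - y g) * v g = ρ g * ((xa g - y g) * s g) := by
            rw [← hveq]; ring
          linarith
        · -- outside: xa g = 0 and ρ g ≤ ρ e
          have hxg : xa g = 0 := by
            by_contra h
            have h2 := hsupp g h
            rw [Finset.mem_union] at h2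
            tauto
          have hrk : densityRank ρ e < densityRank ρ g := by
            have h1 : ¬ (densityRank ρ g + 1 < t) := by
              simpa [internalSet] using hgI
            have h2 : ¬ (densityRank ρ g + 1 = t) := by
              simpa [edgeSet] using hgE
            omega
          have hdr : dr ρ e g := dr_of_rank_lt ρ hrk
          have hρle : ρ g ≤ ρ e := by
            rcases hdr with h | ⟨h, _⟩
            · exact le_of_lt h
            · exact le_of_eq h.symm
          have h1 : v g ≤ ρ e * s g := by
            have := (div_le_iff₀ (hs g)).mp hρle
            simpa [hρ] using this
          have h2 := mul_le_mul_of_nonneg_left h1 (hy g)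
          nlinarith [h2]
    have h1 : ρ e * (∑ g, (xa g - y g) * s g) ≤ ∑ g, (xa g - y g) * v g := by
      rw [Finset.mul_sum]
      exact Finset.sum_le_sum hmain
    have h2 : 0 ≤ ∑ g, (xa g - y g) * s g := by
      have : ∑ g, (xa g - y g) * s g = ∑ g, xa g * s g - ∑ g, y g * s g := by
        rw [← Finset.sum_sub_distrib]; apply Finset.sum_congr rfl; intros; ring
      rw [this]; linarith
    have h3 : ∑ g, (xa g - y g) * v g = ∑ g, xa g * v g - ∑ g, y g * v g := by
      rw [← Finset.sum_sub_distrib]; apply Finset.sum_congr rfl; intros; ring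
    nlinarith [mul_nonneg hρe h2]
  · -- no edge good
    by_cases ht : t = 0
    · -- support empty, so xa = 0, budget forces y = 0
      subst ht
      have hxa0 : ∀ g, xa g = 0 := by
        intro g
        by_contra h
        have := hsupp g h
        simp [internalSet, edgeSet] at this
      have hy0 : ∀ g, y g = 0 := by
        have hzero : ∑ g, y g * s g = 0 := by
          have h0 : ∑ g, xa g * s g = 0 := by
            apply Finset.sum_eq_zero; intro g _; rw [hxa0]; ring
          have hge : 0 ≤ ∑ g, y g * s g :=
            Finset.sum_nonneg fun g _ => mul_nonneg (hy g) (hs g).le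
          linarith [hbud, h0 ▸ hbud]
        intro g
        have := (Finset.sum_eq_zero_iff_of_nonneg
          (fun g _ => mul_nonneg (hy g) (hs g).le)).mp hzero g (Finset.mem_univ g)
        have := mul_eq_zero.mp this
        rcases this with h | h
        · exact h
        · exact absurd h (hs g).ne'
      calc ∑ g, y g * v g = 0 := by
            apply Finset.sum_eq_zero; intro g _; rw [hy0]; ring
        _ ≤ ∑ g, xa g * v g :=
            Finset.sum_nonneg fun g _ => mul_nonneg (hxa g) (hv g)
    · -- t ≥ 1 and no edge: t > m, so every good is internal
      have htm : m < t := by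
        by_contra h
        push_neg at h
        obtain ⟨e, he⟩ := exists_edge ρ (by omega : 1 ≤ t) h
        exact hE ⟨e, by simp [edgeSet, he]⟩
      apply Finset.sum_le_sum
      intro g _
      have hgI : g ∈ internalSet ρ t := by
        simp only [internalSet, Finset.mem_filter, Finset.mem_univ, true_and]
        have := rank_lt ρ g
        omega
      exact mul_le_mul_of_nonneg_right (hI g hgI) (hv g)

end DDaux

/-- Density domination implies feasible envy-freeness (divisible goods). -/
theorem density_domination_implies_FEF
    (n m : ℕ) (v s : Fin n → Fin m → ℝ) (B : Fin n → ℝ)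
    (hv : ∀ a g, 0 ≤ v a g) (hs : ∀ a g, 0 < s a g)
    (x : Fin n → Fin m → ℝ)
    (hx01 : ∀ a g, 0 ≤ x a g ∧ x a g ≤ 1)
    (hxsum : ∀ g, ∑ a, x a g ≤ 1)
    (τ : Fin n → ℕ)
    -- (i): on internal goods, agent a's fraction dominates every other agent's
    (hdom : ∀ a b : Fin n,
      ∀ g ∈ internalSet (fun h => v a h / s a h) (τ a), x b g ≤ x a g)
    -- (ii): tight budgets and support on the τ_a most dense goods
    (htight : ∀ a, ∑ g, x a g * s a g = B a)
    (hsupp : ∀ a g, x a g ≠ 0 →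
      g ∈ internalSet (fun h => v a h / s a h) (τ a) ∪
          edgeSet (fun h => v a h / s a h) (τ a))
    -- (iii): goods internal to some agent are fully allocated
    (hfull : ∀ g, (∃ a, g ∈ internalSet (fun h => v a h / s a h) (τ a)) →
      ∑ a, x a g = 1) :
    -- x is feasibly envy-free: no envy towards other agents ...
    (∀ a b : Fin n, ∀ y : Fin m → ℝ,
        (∀ g, 0 ≤ y g ∧ y g ≤ x b g) → ∑ g, y g * s a g ≤ B a →
        ∑ g, y g * v a g ≤ ∑ g, x a g * v a g) ∧
    -- ... and no envy towards the charity
    (∀ a : Fin n, ∀ y : Fin m → ℝ,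
        (∀ g, 0 ≤ y g ∧ y g ≤ 1 - ∑ b, x b g) → ∑ g, y g * s a g ≤ B a →
        ∑ g, y g * v a g ≤ ∑ g, x a g * v a g) := by
  constructor
  · intro a b y hy hby
    apply DDaux.key (v a) (s a) (hv a) (hs a) (x a) y
      (fun g => (hx01 a g).1) (fun g => (hy g).1) (τ a)
    · intro g hgI
      exact le_trans (hy g).2 (hdom a b g hgI)
    · exact hsupp a
    · rw [htight a]; exact hby
  · intro a y hy hby
    apply DDaux.key (v a) (s a) (hv a) (hs a) (x a) y
      (fun g => (hx01 a g).1) (fun g => (hy g).1) (τ a)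
    · intro g hgI
      have h1 : ∑ b, x b g = 1 := hfull g ⟨a, hgI⟩
      have h2 : y g ≤ 1 - ∑ b, x b g := (hy g).2
      have : y g ≤ 0 := by rw [h1] at h2; linarith
      exact le_trans this (hx01 a g).1
    · exact hsupp a
    · rw [htight a]; exact hby
end

section
/- Let τ ∈ ℤ₊ⁿ with ‖τ‖_∞ ≤ m+1. If the linear program LP₂(τ) is feasible but LP₁(τ) is infeasible, then there exists an agent k ∈ [n] such that LP₂(τ + e_k) is feasible, where e_k is the k-th standard basis vector. -/
open Finset
open scoped BigOperators Classical

section RankLemmas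
variable {M : ℕ} (ρ : Fin M → ℝ)

lemma densityRank_lt (g : Fin M) : densityRank ρ g < M := by
  have h : (Finset.univ.filter (fun h => ρ h > ρ g ∨ (ρ h = ρ g ∧ h < g))) ⊆
      Finset.univ.erase g := by
    intro h hh
    simp only [mem_filter, mem_univ, true_and] at hh
    rcases hh with h1 | ⟨h1, h2⟩
    · exact Finset.mem_erase.2 ⟨by rintro rfl; exact lt_irrefl _ h1, Finset.mem_univ _⟩
    · exact Finset.mem_erase.2 ⟨by rintro rfl; exact lt_irrefl _ h2, Finset.mem_univ _⟩
  calc densityRank ρ g ≤ (Finset.univ.erase g).card := Finset.card_le_card h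
    _ < Finset.univ.card := Finset.card_erase_lt_of_mem (Finset.mem_univ g)
    _ = M := by simp

lemma densityRank_injective : Function.Injective (densityRank ρ) := by
  have key : ∀ a b : Fin M, (ρ a > ρ b ∨ (ρ a = ρ b ∧ a < b)) →
      densityRank ρ a < densityRank ρ b := by
    intro a b hab
    apply Finset.card_lt_card
    constructor
    · intro h hh
      simp only [mem_filter, mem_univ, true_and] at hh ⊢
      rcases hh with h1 | ⟨h1, h2⟩
      · rcases hab with h3 | ⟨h3, h4⟩
        · exact Or.inl (lt_trans h3 h1)
        · exact Or.inl (by rw [← h3]; exact h1)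
      · rcases hab with h3 | ⟨h3, h4⟩
        · exact Or.inl (by rw [h1]; exact h3)
        · exact Or.inr ⟨h1.trans h3, h2.trans h4⟩
    · intro hsub
      have hmem : a ∈ Finset.univ.filter (fun h => ρ h > ρ b ∨ (ρ h = ρ b ∧ h < b)) := by
        simp only [mem_filter, mem_univ, true_and]; exact hab
      have h2 := hsub hmem
      simp only [mem_filter, mem_univ, true_and] at h2
      cases h2 with
      | inl h3 => exact lt_irrefl _ h3
      | inr h3 => exact lt_irrefl _ h3
  intro a b hab
  by_contra hne
  rcases lt_trichotomy (ρ a) (ρ b) with h | h | h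
  · exact absurd hab (Nat.ne_of_gt (key b a (Or.inl h)))
  · rcases lt_or_gt_of_ne (fun h' : a = b => hne h') with h2 | h2
    · exact absurd hab (Nat.ne_of_lt (key a b (Or.inr ⟨h, h2⟩)))
    · exact absurd hab (Nat.ne_of_gt (key b a (Or.inr ⟨h.symm, h2⟩)))
  · exact absurd hab (Nat.ne_of_lt (key a b (Or.inl h)))

lemma exists_densityRank_eq (r : ℕ) (hr : r < M) : ∃ g, densityRank ρ g = r := by
  have hsurj : Function.Surjective
      (fun g : Fin M => (⟨densityRank ρ g, densityRank_lt ρ g⟩ : Fin M)) := by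
    apply Finite.surjective_of_injective
    intro a b hab
    exact densityRank_injective ρ (by simpa using congrArg Fin.val hab)
  obtain ⟨g, hg⟩ := hsurj ⟨r, hr⟩
  exact ⟨g, by simpa using congrArg Fin.val hg⟩

lemma internalSet_succ (t : ℕ) : internalSet ρ (t+1) = internalSet ρ t ∪ edgeSet ρ t := by
  ext g
  simp only [internalSet, edgeSet, mem_union, mem_filter, mem_univ, true_and]
  omega

end RankLemmas

/-- LP₂(τ): budget constraints relaxed to inequalities. -/
noncomputable def LP2Feasible (n m : ℕ) (v s : Fin n → Fin (m+1) → ℝ)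
    (B : Fin n → ℝ) (τ : Fin n → ℕ) : Prop :=
  ∃ z : Fin n → Fin (m+1) → ℝ,
    (∀ a g, 0 ≤ z a g ∧ z a g ≤ 1) ∧
    (∀ a b : Fin n, ∀ g ∈ internalSet (fun h => v a h / s a h) (τ a), z b g ≤ z a g) ∧
    (∀ a, ∑ g ∈ internalSet (fun h => v a h / s a h) (τ a) ∪
            edgeSet (fun h => v a h / s a h) (τ a), z a g * s a g ≤ B a) ∧
    (∀ g, (∃ a, g ∈ internalSet (fun h => v a h / s a h) (τ a)) → ∑ a, z a g = 1) ∧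
    (∀ a h, h ∉ internalSet (fun h' => v a h' / s a h') (τ a) ∪
              edgeSet (fun h' => v a h' / s a h') (τ a) → z a h = 0) ∧
    (∀ h, (∀ a, h ∉ internalSet (fun h' => v a h' / s a h') (τ a)) → ∑ a, z a h ≤ 1)

/-- LP₁(τ): budget constraints hold with equality. -/
noncomputable def LP1Feasible (n m : ℕ) (v s : Fin n → Fin (m+1) → ℝ)
    (B : Fin n → ℝ) (τ : Fin n → ℕ) : Prop :=
  ∃ z : Fin n → Fin (m+1) → ℝ,
    (∀ a g, 0 ≤ z a g ∧ z a g ≤ 1) ∧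
    (∀ a b : Fin n, ∀ g ∈ internalSet (fun h => v a h / s a h) (τ a), z b g ≤ z a g) ∧
    (∀ a, ∑ g ∈ internalSet (fun h => v a h / s a h) (τ a) ∪
            edgeSet (fun h => v a h / s a h) (τ a), z a g * s a g = B a) ∧
    (∀ g, (∃ a, g ∈ internalSet (fun h => v a h / s a h) (τ a)) → ∑ a, z a g = 1) ∧
    (∀ a h, h ∉ internalSet (fun h' => v a h' / s a h') (τ a) ∪
              edgeSet (fun h' => v a h' / s a h') (τ a) → z a h = 0) ∧
    (∀ h, (∀ a, h ∉ internalSet (fun h' => v a h' / s a h') (τ a)) → ∑ a, z a h ≤ 1)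


/-- The constraint set of LP₂. -/
def LPcons (n m : ℕ) (v s : Fin n → Fin (m+1) → ℝ)
    (B : Fin n → ℝ) (τ : Fin n → ℕ) (z : Fin n → Fin (m+1) → ℝ) : Prop :=
    (∀ a g, 0 ≤ z a g ∧ z a g ≤ 1) ∧
    (∀ a b : Fin n, ∀ g ∈ internalSet (fun h => v a h / s a h) (τ a), z b g ≤ z a g) ∧
    (∀ a, ∑ g ∈ internalSet (fun h => v a h / s a h) (τ a) ∪
            edgeSet (fun h => v a h / s a h) (τ a), z a g * s a g ≤ B a) ∧
    (∀ g, (∃ a, g ∈ internalSet (fun h => v a h / s a h) (τ a)) → ∑ a, z a g = 1) ∧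
    (∀ a h, h ∉ internalSet (fun h' => v a h' / s a h') (τ a) ∪
              edgeSet (fun h' => v a h' / s a h') (τ a) → z a h = 0) ∧
    (∀ h, (∀ a, h ∉ internalSet (fun h' => v a h' / s a h') (τ a)) → ∑ a, z a h ≤ 1)

lemma LP2_iff (n m : ℕ) (v s : Fin n → Fin (m+1) → ℝ) (B : Fin n → ℝ) (τ : Fin n → ℕ) :
    LP2Feasible n m v s B τ ↔ ∃ z, LPcons n m v s B τ z := Iff.rfl

section Pert
variable {n m : ℕ} (v s : Fin n → Fin (m+1) → ℝ) (B : Fin n → ℝ) (τ : Fin n → ℕ)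
variable (z : Fin n → Fin (m+1) → ℝ) (g₀ : Fin (m+1)) (w : Fin n → ℝ)

/-- the perturbed solution -/
noncomputable def pert : Fin n → Fin (m+1) → ℝ :=
  fun a g => if g = g₀ then z a g₀ + w a else z a g

lemma pert_sum_mul (a : Fin n) (S : Finset (Fin (m+1))) :
    ∑ g ∈ S, pert z g₀ w a g * s a g
      = ∑ g ∈ S, z a g * s a g + (if g₀ ∈ S then w a * s a g₀ else 0) := by
  have h1 : ∀ g ∈ S, pert z g₀ w a g * s a g
      = z a g * s a g + (if g = g₀ then w a * s a g else 0) := by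
    intro g _
    by_cases hg : g = g₀
    · subst hg; simp [pert]; ring
    · simp [pert, hg]
  rw [Finset.sum_congr rfl h1, Finset.sum_add_distrib, Finset.sum_ite_eq' S g₀ (fun g => w a * s a g)]

lemma pert_sum_agents (g : Fin (m+1)) :
    ∑ a, pert z g₀ w a g = ∑ a, z a g + (if g = g₀ then ∑ a, w a else 0) := by
  by_cases hg : g = g₀
  · subst hg; simp [pert, Finset.sum_add_distrib]
  · simp [pert, hg]

lemma pert_sum_goods (a : Fin n) :
    ∑ g, pert z g₀ w a g = ∑ g, z a g + w a := by
  have h1 : ∀ g ∈ (univ : Finset (Fin (m+1))), pert z g₀ w a g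
      = z a g + (if g = g₀ then w a else 0) := by
    intro g _
    by_cases hg : g = g₀
    · subst hg; simp [pert]
    · simp [pert, hg]
  rw [Finset.sum_congr rfl h1, Finset.sum_add_distrib,
    Finset.sum_ite_eq' univ g₀ (fun _ => w a)]
  simp

lemma pert_sum_sq (a : Fin n) :
    ∑ g, (pert z g₀ w a g)^2 = ∑ g, (z a g)^2 + (2 * z a g₀ * w a + w a ^ 2) := by
  have h1 : ∀ g ∈ (univ : Finset (Fin (m+1))), (pert z g₀ w a g)^2
      = (z a g)^2 + (if g = g₀ then 2 * z a g₀ * w a + w a ^ 2 else 0) := by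
    intro g _
    by_cases hg : g = g₀
    · subst hg; simp [pert]; ring
    · simp [pert, hg]
  rw [Finset.sum_congr rfl h1, Finset.sum_add_distrib,
    Finset.sum_ite_eq' univ g₀ (fun _ => 2 * z a g₀ * w a + w a ^ 2)]
  simp

lemma pert_mem
    (hz : LPcons n m v s B τ z)
    (hw0 : ∀ a, w a ≠ 0 → g₀ ∈ internalSet (fun h => v a h / s a h) (τ a) ∪
              edgeSet (fun h => v a h / s a h) (τ a))
    (hbound : ∀ a, 0 ≤ z a g₀ + w a ∧ z a g₀ + w a ≤ 1)
    (hbudget : ∀ a, w a * s a g₀ ≤ B a - ∑ g ∈ internalSet (fun h => v a h / s a h) (τ a) ∪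
            edgeSet (fun h => v a h / s a h) (τ a), z a g * s a g)
    (hdom : ∀ a b : Fin n, g₀ ∈ internalSet (fun h => v a h / s a h) (τ a) →
              z b g₀ + w b ≤ z a g₀ + w a)
    (hsum : ∑ a, (z a g₀ + w a) ≤ 1)
    (hsumeq : (∃ a, g₀ ∈ internalSet (fun h => v a h / s a h) (τ a)) →
              ∑ a, (z a g₀ + w a) = 1) :
    LPcons n m v s B τ (pert z g₀ w) := by
  obtain ⟨c1, c2, c3, c4, c5, c6⟩ := hz
  refine ⟨?_, ?_, ?_, ?_, ?_, ?_⟩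
  · intro a g
    by_cases hg : g = g₀
    · subst hg; simpa [pert] using hbound a
    · simpa [pert, hg] using c1 a g
  · intro a b g hg
    by_cases hgg : g = g₀
    · subst hgg
      simpa [pert] using hdom a b hg
    · simpa [pert, hgg] using c2 a b g hg
  · intro a
    rw [pert_sum_mul]
    by_cases hmem : g₀ ∈ internalSet (fun h => v a h / s a h) (τ a) ∪
      edgeSet (fun h => v a h / s a h) (τ a)
    · simp only [hmem, if_true]
      have := hbudget a
      linarith
    · simp only [hmem, if_false]
      simpa using c3 a
  · intro g hg
    rw [pert_sum_agents]
    by_cases hgg : g = g₀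
    · subst hgg
      simp only [if_true]
      rw [← Finset.sum_add_distrib]
      exact hsumeq hg
    · simp only [hgg, if_false, add_zero]
      exact c4 g hg
  · intro a h hh
    by_cases hgg : h = g₀
    · rw [hgg] at hh
      have hz0 : z a g₀ = 0 := c5 a g₀ hh
      have hw : w a = 0 := by
        by_contra hw
        exact hh (hw0 a hw)
      simp [pert, hgg, hz0, hw]
    · simpa [pert, hgg] using c5 a h hh
  · intro h hh
    rw [pert_sum_agents]
    by_cases hgg : h = g₀
    · subst hgg
      simp only [if_true]
      rw [← Finset.sum_add_distrib]
      exact hsum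
    · simp only [hgg, if_false, add_zero]
      exact c6 h hh

end Pert

set_option maxHeartbeats 1000000 in
/-- Incongruity lemma: if LP₂(τ) is feasible and LP₁(τ) is infeasible
(with ‖τ‖_∞ ≤ m+1), then LP₂(τ + e_k) is feasible for some agent k. -/
theorem LP_incongruity
    (n m : ℕ) (v s : Fin n → Fin (m+1) → ℝ) (B : Fin n → ℝ) (Bmax : ℝ)
    (hv : ∀ a g, 0 ≤ v a g) (hs : ∀ a g, 0 < s a g)
    (hB : ∀ a, 0 < B a) (hBmax : ∀ a, B a ≤ Bmax)
    (hvlast : ∀ a, v a (Fin.last m) = 0)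
    (hslast : ∀ a, s a (Fin.last m) = 2 * n * Bmax)
    (τ : Fin n → ℕ) (hτ1 : ∀ a, 1 ≤ τ a) (hτub : ∀ a, τ a ≤ m + 1)
    (h2 : LP2Feasible n m v s B τ) (h1 : ¬ LP1Feasible n m v s B τ) :
    ∃ k : Fin n, LP2Feasible n m v s B (Function.update τ k (τ k + 1)) := by
  classical
  set P : Set (Fin n → Fin (m+1) → ℝ) := {z | LPcons n m v s B τ z} with hPdef
  have hPne : P.Nonempty := h2
  have capp : ∀ (a : Fin n) (g : Fin (m+1)),
      Continuous (fun z : Fin n → Fin (m+1) → ℝ => z a g) :=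
    fun a g => (continuous_apply g).comp (continuous_apply a)
  have contS : ∀ a : Fin n, Continuous (fun z : Fin n → Fin (m+1) → ℝ =>
      ∑ g ∈ internalSet (fun h => v a h / s a h) (τ a) ∪
        edgeSet (fun h => v a h / s a h) (τ a), z a g * s a g) :=
    fun a => continuous_finset_sum _ fun g _ => (capp a g).mul continuous_const
  have contA : ∀ g : Fin (m+1), Continuous (fun z : Fin n → Fin (m+1) → ℝ => ∑ a, z a g) :=
    fun g => continuous_finset_sum _ fun a _ => capp a g
  have hPclosed : IsClosed P := by
    have e1 : IsClosed {z : Fin n → Fin (m+1) → ℝ | ∀ a g, 0 ≤ z a g ∧ z a g ≤ 1} := by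
      have heq : {z : Fin n → Fin (m+1) → ℝ | ∀ a g, 0 ≤ z a g ∧ z a g ≤ 1}
          = ⋂ a, ⋂ g, ({z : Fin n → Fin (m+1) → ℝ | 0 ≤ z a g} ∩ {z | z a g ≤ 1}) := by
        ext z
        simp only [Set.mem_setOf_eq, Set.mem_iInter, Set.mem_inter_iff]
      rw [heq]
      exact isClosed_iInter fun a => isClosed_iInter fun g =>
        (isClosed_le continuous_const (capp a g)).inter (isClosed_le (capp a g) continuous_const)
    have e2 : IsClosed {z : Fin n → Fin (m+1) → ℝ |
        ∀ a b : Fin n, ∀ g ∈ internalSet (fun h => v a h / s a h) (τ a), z b g ≤ z a g} := by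
      have heq : {z : Fin n → Fin (m+1) → ℝ |
          ∀ a b : Fin n, ∀ g ∈ internalSet (fun h => v a h / s a h) (τ a), z b g ≤ z a g}
          = ⋂ a, ⋂ b, ⋂ g, {z : Fin n → Fin (m+1) → ℝ |
              g ∈ internalSet (fun h => v a h / s a h) (τ a) → z b g ≤ z a g} := by
        ext z
        simp only [Set.mem_setOf_eq, Set.mem_iInter]
      rw [heq]
      refine isClosed_iInter fun a => isClosed_iInter fun b => isClosed_iInter fun g => ?_
      by_cases hg : g ∈ internalSet (fun h => v a h / s a h) (τ a)
      · have h2 : {z : Fin n → Fin (m+1) → ℝ |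
            g ∈ internalSet (fun h => v a h / s a h) (τ a) → z b g ≤ z a g}
            = {z : Fin n → Fin (m+1) → ℝ | z b g ≤ z a g} := by
          ext z; simp [hg]
        rw [h2]
        exact isClosed_le (capp b g) (capp a g)
      · have h2 : {z : Fin n → Fin (m+1) → ℝ |
            g ∈ internalSet (fun h => v a h / s a h) (τ a) → z b g ≤ z a g}
            = Set.univ := by
          ext z; simp [hg]
        rw [h2]
        exact isClosed_univ
    have e3 : IsClosed {z : Fin n → Fin (m+1) → ℝ |
        ∀ a, ∑ g ∈ internalSet (fun h => v a h / s a h) (τ a) ∪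
          edgeSet (fun h => v a h / s a h) (τ a), z a g * s a g ≤ B a} := by
      have heq : {z : Fin n → Fin (m+1) → ℝ |
          ∀ a, ∑ g ∈ internalSet (fun h => v a h / s a h) (τ a) ∪
            edgeSet (fun h => v a h / s a h) (τ a), z a g * s a g ≤ B a}
          = ⋂ a, {z : Fin n → Fin (m+1) → ℝ |
              ∑ g ∈ internalSet (fun h => v a h / s a h) (τ a) ∪
                edgeSet (fun h => v a h / s a h) (τ a), z a g * s a g ≤ B a} := by
        ext z
        simp only [Set.mem_setOf_eq, Set.mem_iInter]
      rw [heq]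
      exact isClosed_iInter fun a => isClosed_le (contS a) continuous_const
    have e4 : IsClosed {z : Fin n → Fin (m+1) → ℝ |
        ∀ g, (∃ a, g ∈ internalSet (fun h => v a h / s a h) (τ a)) → ∑ a, z a g = 1} := by
      have heq : {z : Fin n → Fin (m+1) → ℝ |
          ∀ g, (∃ a, g ∈ internalSet (fun h => v a h / s a h) (τ a)) → ∑ a, z a g = 1}
          = ⋂ g, {z : Fin n → Fin (m+1) → ℝ |
              (∃ a, g ∈ internalSet (fun h => v a h / s a h) (τ a)) → ∑ a, z a g = 1} := by
        ext z
        simp only [Set.mem_setOf_eq, Set.mem_iInter]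
      rw [heq]
      refine isClosed_iInter fun g => ?_
      by_cases hg : ∃ a, g ∈ internalSet (fun h => v a h / s a h) (τ a)
      · have h2 : {z : Fin n → Fin (m+1) → ℝ |
            (∃ a, g ∈ internalSet (fun h => v a h / s a h) (τ a)) → ∑ a, z a g = 1}
            = {z : Fin n → Fin (m+1) → ℝ | ∑ a, z a g = 1} := by
          ext z; simp [hg]
        rw [h2]
        exact isClosed_eq (contA g) continuous_const
      · have h2 : {z : Fin n → Fin (m+1) → ℝ |
            (∃ a, g ∈ internalSet (fun h => v a h / s a h) (τ a)) → ∑ a, z a g = 1}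
            = Set.univ := by
          ext z; simp [hg]
        rw [h2]
        exact isClosed_univ
    have e5 : IsClosed {z : Fin n → Fin (m+1) → ℝ |
        ∀ a h, h ∉ internalSet (fun h' => v a h' / s a h') (τ a) ∪
          edgeSet (fun h' => v a h' / s a h') (τ a) → z a h = 0} := by
      have heq : {z : Fin n → Fin (m+1) → ℝ |
          ∀ a h, h ∉ internalSet (fun h' => v a h' / s a h') (τ a) ∪
            edgeSet (fun h' => v a h' / s a h') (τ a) → z a h = 0}
          = ⋂ a, ⋂ h, {z : Fin n → Fin (m+1) → ℝ |
              h ∉ internalSet (fun h' => v a h' / s a h') (τ a) ∪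
                edgeSet (fun h' => v a h' / s a h') (τ a) → z a h = 0} := by
        ext z
        simp only [Set.mem_setOf_eq, Set.mem_iInter]
      rw [heq]
      refine isClosed_iInter fun a => isClosed_iInter fun h => ?_
      by_cases hg : h ∉ internalSet (fun h' => v a h' / s a h') (τ a) ∪
          edgeSet (fun h' => v a h' / s a h') (τ a)
      · have h2 : {z : Fin n → Fin (m+1) → ℝ |
            h ∉ internalSet (fun h' => v a h' / s a h') (τ a) ∪
              edgeSet (fun h' => v a h' / s a h') (τ a) → z a h = 0}
            = {z : Fin n → Fin (m+1) → ℝ | z a h = 0} := by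
          ext z; simp [hg]
        rw [h2]
        exact isClosed_eq (capp a h) continuous_const
      · have h2 : {z : Fin n → Fin (m+1) → ℝ |
            h ∉ internalSet (fun h' => v a h' / s a h') (τ a) ∪
              edgeSet (fun h' => v a h' / s a h') (τ a) → z a h = 0}
            = Set.univ := by
          ext z
          simp only [Set.mem_setOf_eq, Set.mem_univ, iff_true]
          intro hc
          exact absurd hc hg
        rw [h2]
        exact isClosed_univ
    have e6 : IsClosed {z : Fin n → Fin (m+1) → ℝ |
        ∀ h, (∀ a, h ∉ internalSet (fun h' => v a h' / s a h') (τ a)) → ∑ a, z a h ≤ 1} := by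
      have heq : {z : Fin n → Fin (m+1) → ℝ |
          ∀ h, (∀ a, h ∉ internalSet (fun h' => v a h' / s a h') (τ a)) → ∑ a, z a h ≤ 1}
          = ⋂ h, {z : Fin n → Fin (m+1) → ℝ |
              (∀ a, h ∉ internalSet (fun h' => v a h' / s a h') (τ a)) → ∑ a, z a h ≤ 1} := by
        ext z
        simp only [Set.mem_setOf_eq, Set.mem_iInter]
      rw [heq]
      refine isClosed_iInter fun h => ?_
      by_cases hg : ∀ a, h ∉ internalSet (fun h' => v a h' / s a h') (τ a)
      · have h2 : {z : Fin n → Fin (m+1) → ℝ |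
            (∀ a, h ∉ internalSet (fun h' => v a h' / s a h') (τ a)) → ∑ a, z a h ≤ 1}
            = {z : Fin n → Fin (m+1) → ℝ | ∑ a, z a h ≤ 1} := by
          ext z; simp [hg]
        rw [h2]
        exact isClosed_le (contA h) continuous_const
      · have h2 : {z : Fin n → Fin (m+1) → ℝ |
            (∀ a, h ∉ internalSet (fun h' => v a h' / s a h') (τ a)) → ∑ a, z a h ≤ 1}
            = Set.univ := by
          ext z; simp [hg]
        rw [h2]
        exact isClosed_univ
    have hPeq : P = {z : Fin n → Fin (m+1) → ℝ | ∀ a g, 0 ≤ z a g ∧ z a g ≤ 1} ∩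
        ({z : Fin n → Fin (m+1) → ℝ |
          ∀ a b : Fin n, ∀ g ∈ internalSet (fun h => v a h / s a h) (τ a), z b g ≤ z a g} ∩
        ({z : Fin n → Fin (m+1) → ℝ |
          ∀ a, ∑ g ∈ internalSet (fun h => v a h / s a h) (τ a) ∪
            edgeSet (fun h => v a h / s a h) (τ a), z a g * s a g ≤ B a} ∩
        ({z : Fin n → Fin (m+1) → ℝ |
          ∀ g, (∃ a, g ∈ internalSet (fun h => v a h / s a h) (τ a)) → ∑ a, z a g = 1} ∩
        ({z : Fin n → Fin (m+1) → ℝ |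
          ∀ a h, h ∉ internalSet (fun h' => v a h' / s a h') (τ a) ∪
            edgeSet (fun h' => v a h' / s a h') (τ a) → z a h = 0} ∩
        {z : Fin n → Fin (m+1) → ℝ |
          ∀ h, (∀ a, h ∉ internalSet (fun h' => v a h' / s a h') (τ a)) → ∑ a, z a h ≤ 1})))) := by
      rfl
    rw [hPeq]
    exact e1.inter (e2.inter (e3.inter (e4.inter (e5.inter e6))))
  have hKcomp : IsCompact (Set.pi Set.univ fun _ : Fin n =>
      Set.pi Set.univ fun _ : Fin (m+1) => Set.Icc (0:ℝ) 1) :=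
    isCompact_univ_pi fun _ => isCompact_univ_pi fun _ => isCompact_Icc
  have hPsub : P ⊆ Set.pi Set.univ (fun _ : Fin n =>
      Set.pi Set.univ fun _ : Fin (m+1) => Set.Icc (0:ℝ) 1) := by
    intro z hz
    simp only [Set.mem_pi, Set.mem_univ, Set.mem_Icc, forall_const]
    exact fun a g => hz.1 a g
  have hPcomp : IsCompact P := hKcomp.of_isClosed_subset hPclosed hPsub
  have contR : Continuous (fun z : Fin n → Fin (m+1) → ℝ => ∑ a, ∑ g, z a g) :=
    continuous_finset_sum _ fun a _ => continuous_finset_sum _ fun g _ => capp a g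
  have contQ : Continuous (fun z : Fin n → Fin (m+1) → ℝ => ∑ a, ∑ g, (z a g)^2) :=
    continuous_finset_sum _ fun a _ => continuous_finset_sum _ fun g _ => (capp a g).pow 2
  obtain ⟨z₁, hz₁P, hz₁max⟩ := hPcomp.exists_isMaxOn hPne contR.continuousOn
  have hP1comp : IsCompact (P ∩ {z | ∑ a, ∑ g, z a g = ∑ a, ∑ g, z₁ a g}) :=
    hPcomp.inter_right (isClosed_eq contR continuous_const)
  obtain ⟨Z, hZmem, hZmin⟩ := hP1comp.exists_isMinOn ⟨z₁, hz₁P, rfl⟩ contQ.continuousOn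
  obtain ⟨hZP, hZR⟩ := hZmem
  have hZcons : LPcons n m v s B τ Z := hZP
  obtain ⟨C1, C2, C3, C4, C5, C6⟩ := hZcons
  have hZmax : ∀ y ∈ P, (∑ a, ∑ g, y a g) ≤ ∑ a, ∑ g, Z a g := by
    intro y hy
    have h := hz₁max hy
    simp only [Set.mem_setOf_eq] at hZR
    rw [hZR]
    exact h
  -- a slack agent exists
  have hslack : ∃ k, ∑ g ∈ internalSet (fun h => v k h / s k h) (τ k) ∪
      edgeSet (fun h => v k h / s k h) (τ k), Z k g * s k g < B k := by
    by_contra hcon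
    push_neg at hcon
    exact h1 ⟨Z, C1, C2, fun a => le_antisymm (C3 a) (hcon a), C4, C5, C6⟩
  obtain ⟨k, hk⟩ := hslack
  -- the edge good of k
  have hrk : τ k - 1 < m + 1 := by have := hτub k; omega
  obtain ⟨g₀, hg₀⟩ := exists_densityRank_eq (fun h => v k h / s k h) (τ k - 1) hrk
  have hg₀rank : densityRank (fun h => v k h / s k h) g₀ + 1 = τ k := by
    have := hτ1 k; omega
  have hg₀E : g₀ ∈ edgeSet (fun h => v k h / s k h) (τ k) := by
    simp [edgeSet, hg₀rank]
  have hg₀UE : g₀ ∈ internalSet (fun h => v k h / s k h) (τ k) ∪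
      edgeSet (fun h => v k h / s k h) (τ k) := mem_union_right _ hg₀E
  -- Claim A : good g₀ is fully allocated
  have hA : ∑ a, Z a g₀ = 1 := by
    by_cases hI : ∃ a, g₀ ∈ internalSet (fun h => v a h / s a h) (τ a)
    · exact C4 g₀ hI
    · push_neg at hI
      by_contra hne
      have hle : ∑ a, Z a g₀ ≤ 1 := C6 g₀ hI
      have hlt : ∑ a, Z a g₀ < 1 := lt_of_le_of_ne hle hne
      have hslackpos : 0 < B k - ∑ g ∈ internalSet (fun h => v k h / s k h) (τ k) ∪
          edgeSet (fun h => v k h / s k h) (τ k), Z k g * s k g := by linarith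
      set ε : ℝ := min (1 - ∑ a, Z a g₀)
        ((B k - ∑ g ∈ internalSet (fun h => v k h / s k h) (τ k) ∪
          edgeSet (fun h => v k h / s k h) (τ k), Z k g * s k g) / s k g₀) with hεdef
      have hεpos : 0 < ε := lt_min (by linarith) (div_pos hslackpos (hs k g₀))
      set w : Fin n → ℝ := fun a => if a = k then ε else 0 with hwdef
      have hsumw : ∑ a, w a = ε := by
        rw [hwdef, Finset.sum_ite_eq' univ k (fun _ => ε)]
        simp
      have hZkle : Z k g₀ ≤ ∑ a, Z a g₀ :=
        Finset.single_le_sum (fun i _ => (C1 i g₀).1) (mem_univ k)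
      have hmem : LPcons n m v s B τ (pert Z g₀ w) := by
        apply pert_mem v s B τ Z g₀ w ⟨C1, C2, C3, C4, C5, C6⟩
        · intro a ha
          rw [hwdef] at ha
          by_cases hak : a = k
          · subst hak; exact hg₀UE
          · simp [hak] at ha
        · intro a
          by_cases hak : a = k
          · subst hak
            simp only [hwdef, if_pos rfl]
            constructor
            · have := (C1 a g₀).1; linarith
            · have h1 : ε ≤ 1 - ∑ b, Z b g₀ := min_le_left _ _
              linarith
          · simp only [hwdef, if_neg hak, add_zero]
            exact C1 a g₀
        · intro a
          by_cases hak : a = k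
          · subst hak
            simp only [hwdef, if_pos rfl]
            have h1 : ε ≤ (B a - ∑ g ∈ internalSet (fun h => v a h / s a h) (τ a) ∪
                edgeSet (fun h => v a h / s a h) (τ a), Z a g * s a g) / s a g₀ :=
              min_le_right _ _
            rw [← le_div_iff₀ (hs a g₀)]
            exact h1
          · simp only [hwdef, if_neg hak, zero_mul]
            have := C3 a; linarith
        · intro a b hmem
          exact absurd hmem (hI a)
        · rw [Finset.sum_add_distrib, hsumw]
          have h1 : ε ≤ 1 - ∑ a, Z a g₀ := min_le_left _ _
          linarith
        · intro h
          obtain ⟨a, ha⟩ := h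
          exact absurd ha (hI a)
      have hRle := hZmax (pert Z g₀ w) hmem
      have hReq : ∑ a, ∑ g, pert Z g₀ w a g = ∑ a, ∑ g, Z a g + ε := by
        rw [Finset.sum_congr rfl (fun a _ => pert_sum_goods Z g₀ w a),
          Finset.sum_add_distrib, hsumw]
      linarith
  -- Claim B : agent k holds a maximal share of g₀
  have hBtop : ∀ b, Z b g₀ ≤ Z k g₀ := by
    by_contra hcon
    push_neg at hcon
    obtain ⟨b₁, hb₁⟩ := hcon
    have himgne : (univ.image (fun a => Z a g₀)).Nonempty :=
      ⟨Z b₁ g₀, mem_image_of_mem _ (mem_univ b₁)⟩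
    set t : ℝ := (univ.image (fun a => Z a g₀)).max' himgne with htdef
    have htge : ∀ a, Z a g₀ ≤ t := fun a =>
      Finset.le_max' (univ.image (fun a => Z a g₀)) (Z a g₀)
        (mem_image_of_mem _ (mem_univ a))
    have htmem : ∃ a, Z a g₀ = t := by
      obtain ⟨a, -, ha⟩ := Finset.mem_image.1 (Finset.max'_mem _ himgne)
      exact ⟨a, ha⟩
    have htk : Z k g₀ < t := lt_of_lt_of_le hb₁ (htge b₁)
    set U : Finset (Fin n) := univ.filter (fun a => Z a g₀ = t) with hUdef
    have hkU : k ∉ U := by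
      simp only [hUdef, mem_filter, mem_univ, true_and]
      exact ne_of_lt htk
    have hUmem : ∀ a ∈ U, Z a g₀ = t := fun a ha => (mem_filter.1 ha).2
    have hUne : U.Nonempty := by
      obtain ⟨a, ha⟩ := htmem
      exact ⟨a, mem_filter.2 ⟨mem_univ a, ha⟩⟩
    set r : ℕ := U.card with hrdef
    have hrpos : 0 < r := Finset.card_pos.2 hUne
    have hr1 : (1:ℝ) ≤ (r:ℝ) := by exact_mod_cast hrpos
    have hrR : (0:ℝ) < (r:ℝ) := by linarith
    have ht1 : t ≤ 1 := by obtain ⟨a, ha⟩ := htmem; rw [← ha]; exact (C1 a g₀).2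
    have ht0 : 0 ≤ Z k g₀ := (C1 k g₀).1
    have hVne : (univ.filter (fun c => c ∉ U)).Nonempty :=
      ⟨k, mem_filter.2 ⟨mem_univ k, hkU⟩⟩
    set d : ℝ := (univ.filter (fun c => c ∉ U)).inf' hVne (fun c => t - Z c g₀) with hddef
    have hdpos : 0 < d := by
      rw [hddef, Finset.lt_inf'_iff]
      intro c hc
      have hcU : c ∉ U := (mem_filter.1 hc).2
      have hne : Z c g₀ ≠ t := fun h => hcU (mem_filter.2 ⟨mem_univ c, h⟩)
      have := lt_of_le_of_ne (htge c) hne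
      linarith
    have hdle : ∀ c, c ∉ U → d ≤ t - Z c g₀ := fun c hc =>
      Finset.inf'_le _ (mem_filter.2 ⟨mem_univ c, hc⟩)
    set slack : ℝ := B k - ∑ g ∈ internalSet (fun h => v k h / s k h) (τ k) ∪
        edgeSet (fun h => v k h / s k h) (τ k), Z k g * s k g with hslackdef
    have hslackpos : 0 < slack := by rw [hslackdef]; linarith
    set δ : ℝ := min d (min ((t - Z k g₀)/(2*((r:ℝ)+1))) (slack/((r:ℝ) * s k g₀))) with hδdef
    have hδpos : 0 < δ := by
      apply lt_min hdpos
      apply lt_min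
      · apply div_pos (by linarith) (by linarith)
      · exact div_pos hslackpos (mul_pos hrR (hs k g₀))
    have hδd : δ ≤ d := min_le_left _ _
    have hkey : ((r:ℝ)+1) * δ ≤ (t - Z k g₀)/2 := by
      have h1 : δ ≤ (t - Z k g₀)/(2*((r:ℝ)+1)) := le_trans (min_le_right _ _) (min_le_left _ _)
      have h2 : (0:ℝ) < (r:ℝ)+1 := by linarith
      have h3 := mul_le_mul_of_nonneg_left h1 h2.le
      have h4 : ((r:ℝ)+1) * ((t - Z k g₀)/(2*((r:ℝ)+1))) = (t - Z k g₀)/2 := by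
        field_simp
      linarith
    have hδslack : (r:ℝ) * δ * s k g₀ ≤ slack := by
      have h1 : δ ≤ slack/((r:ℝ) * s k g₀) := le_trans (min_le_right _ _) (min_le_right _ _)
      have h2 : (0:ℝ) < (r:ℝ) * s k g₀ := mul_pos hrR (hs k g₀)
      have h3 := mul_le_mul_of_nonneg_left h1 h2.le
      rw [mul_div_cancel₀ _ (ne_of_gt h2)] at h3
      calc (r:ℝ)*δ*s k g₀ = ((r:ℝ)*s k g₀)*δ := by ring
        _ ≤ slack := h3
    set w : Fin n → ℝ := fun a => if a = k then (r:ℝ)*δ else if a ∈ U then -δ else 0 with hwdef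
    have hwk : w k = (r:ℝ)*δ := by simp [hwdef]
    have hwU : ∀ a ∈ U, w a = -δ := by
      intro a ha
      have hak : a ≠ k := by rintro rfl; exact hkU ha
      simp [hwdef, hak, ha]
    have hwo : ∀ a, a ≠ k → a ∉ U → w a = 0 := by
      intro a h1' h2'; simp [hwdef, h1', h2']
    have hwsplit : ∀ a, w a = (if a = k then (r:ℝ)*δ else 0) + (if a ∈ U then -δ else 0) := by
      intro a
      by_cases hak : a = k
      · subst hak; simp [hwdef, hkU]
      · by_cases haU : a ∈ U <;> simp [hwdef, hak, haU]
    have hsumw : ∑ a, w a = 0 := by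
      rw [Finset.sum_congr rfl (fun a _ => hwsplit a), Finset.sum_add_distrib,
        Finset.sum_ite_eq' univ k (fun _ => (r:ℝ)*δ),
        Finset.sum_ite_mem univ U (fun _ => -δ), Finset.univ_inter, Finset.sum_const]
      simp only [mem_univ, if_true, nsmul_eq_mul, ← hrdef]
      ring
    have hIntU : ∀ a, g₀ ∈ internalSet (fun h => v a h / s a h) (τ a) → (a ∈ U ∧ a ≠ k) := by
      intro a ha
      obtain ⟨a₀, ha₀⟩ := htmem
      have h1 : Z a₀ g₀ ≤ Z a g₀ := C2 a a₀ g₀ ha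
      have h2 : Z a g₀ = t := le_antisymm (htge a) (by rw [← ha₀]; exact h1)
      have haU : a ∈ U := mem_filter.2 ⟨mem_univ a, h2⟩
      exact ⟨haU, by rintro rfl; exact hkU haU⟩
    have hmem : LPcons n m v s B τ (pert Z g₀ w) := by
      apply pert_mem v s B τ Z g₀ w ⟨C1, C2, C3, C4, C5, C6⟩
      · intro a ha
        by_cases hak : a = k
        · subst hak; exact hg₀UE
        · by_cases haU : a ∈ U
          · by_contra hnot
            have h0 : Z a g₀ = 0 := C5 a g₀ hnot
            have h1 : Z a g₀ = t := hUmem a haU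
            linarith
          · exact absurd (hwo a hak haU) ha
      · intro a
        by_cases hak : a = k
        · subst hak
          rw [hwk]
          constructor
          · have h0 := (C1 a g₀).1
            have h1 : 0 ≤ (r:ℝ)*δ := mul_nonneg hrR.le hδpos.le
            linarith
          · nlinarith [hkey, hδpos]
        · by_cases haU : a ∈ U
          · rw [hwU a haU, hUmem a haU]
            constructor
            · nlinarith [hkey, hδpos, ht0, htk]
            · linarith [hδpos]
          · rw [hwo a hak haU, add_zero]; exact C1 a g₀
      · intro a
        by_cases hak : a = k
        · subst hak
          rw [hwk, ← hslackdef]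
          exact hδslack
        · by_cases haU : a ∈ U
          · rw [hwU a haU]
            have h1 := C3 a
            have h2 : -δ * s a g₀ ≤ 0 := by nlinarith [hδpos, hs a g₀]
            linarith
          · rw [hwo a hak haU, zero_mul]
            have := C3 a; linarith
      · intro a b hmemI
        obtain ⟨haU, hak⟩ := hIntU a hmemI
        rw [hUmem a haU, hwU a haU]
        by_cases hbk : b = k
        · subst hbk
          rw [hwk]
          linarith [hkey, htk]
        · by_cases hbU : b ∈ U
          · rw [hUmem b hbU, hwU b hbU]
          · rw [hwo b hbk hbU, add_zero]
            have h1 := hdle b hbU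
            linarith [hδd]
      · rw [Finset.sum_add_distrib, hsumw, hA]; norm_num
      · intro _
        rw [Finset.sum_add_distrib, hsumw, hA]; norm_num
    have hReq : ∑ a, ∑ g, pert Z g₀ w a g = ∑ a, ∑ g, Z a g := by
      rw [Finset.sum_congr rfl (fun a _ => pert_sum_goods Z g₀ w a),
        Finset.sum_add_distrib, hsumw, add_zero]
    have hmemP1 : pert Z g₀ w ∈ P ∩ {z | ∑ a, ∑ g, z a g = ∑ a, ∑ g, z₁ a g} := by
      refine ⟨hmem, ?_⟩
      simp only [Set.mem_setOf_eq] at hZR ⊢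
      rw [hReq, hZR]
    have hQle := hZmin hmemP1
    simp only [Set.mem_setOf_eq] at hQle
    have hQeq : ∑ a, ∑ g, (pert Z g₀ w a g)^2
        = ∑ a, ∑ g, (Z a g)^2 + ∑ a, (2 * Z a g₀ * w a + w a ^ 2) := by
      rw [Finset.sum_congr rfl (fun a _ => pert_sum_sq Z g₀ w a), Finset.sum_add_distrib]
    have hqsplit : ∀ a, 2 * Z a g₀ * w a + w a ^ 2
        = (if a = k then 2 * Z k g₀ * ((r:ℝ)*δ) + ((r:ℝ)*δ)^2 else 0)
          + (if a ∈ U then -2*t*δ + δ^2 else 0) := by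
      intro a
      by_cases hak : a = k
      · subst hak; rw [hwk]; simp [hkU]
      · by_cases haU : a ∈ U
        · rw [hwU a haU, hUmem a haU]
          simp only [hak, if_false, haU, if_true, zero_add]
          ring
        · rw [hwo a hak haU]
          simp [hak, haU]
    have hqsum : ∑ a, (2 * Z a g₀ * w a + w a ^ 2)
        = (2 * Z k g₀ * ((r:ℝ)*δ) + ((r:ℝ)*δ)^2) + (r:ℝ) * (-2*t*δ + δ^2) := by
      rw [Finset.sum_congr rfl (fun a _ => hqsplit a), Finset.sum_add_distrib,
        Finset.sum_ite_eq' univ k (fun _ => 2 * Z k g₀ * ((r:ℝ)*δ) + ((r:ℝ)*δ)^2),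
        Finset.sum_ite_mem univ U (fun _ => -2*t*δ + δ^2), Finset.univ_inter,
        Finset.sum_const]
      simp only [mem_univ, if_true, nsmul_eq_mul, ← hrdef]
    have hrδ : (0:ℝ) < (r:ℝ)*δ := mul_pos hrR hδpos
    have hneg : (2 * Z k g₀ * ((r:ℝ)*δ) + ((r:ℝ)*δ)^2) + (r:ℝ) * (-2*t*δ + δ^2) < 0 := by
      nlinarith [mul_le_mul_of_nonneg_left hkey hrδ.le, mul_pos hrδ (sub_pos.2 htk)]
    have hlt : ∑ a, ∑ g, (pert Z g₀ w a g)^2 < ∑ a, ∑ g, (Z a g)^2 := by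
      rw [hQeq, hqsum]; linarith
    linarith
  -- Final assembly
  have hupk : Function.update τ k (τ k + 1) k = τ k + 1 := Function.update_self k (τ k + 1) τ
  have hupne : ∀ a : Fin n, a ≠ k → Function.update τ k (τ k + 1) a = τ a :=
    fun a ha => Function.update_of_ne ha (τ k + 1) τ
  have hedge_eq : ∀ g ∈ edgeSet (fun h => v k h / s k h) (τ k), g = g₀ := by
    intro g hg
    simp only [edgeSet, mem_filter, mem_univ, true_and] at hg
    have heq : densityRank (fun h => v k h / s k h) g
        = densityRank (fun h => v k h / s k h) g₀ := by omega
    exact densityRank_injective _ heq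
  have hIk : internalSet (fun h => v k h / s k h) (τ k + 1)
      = internalSet (fun h => v k h / s k h) (τ k) ∪ edgeSet (fun h => v k h / s k h) (τ k) :=
    internalSet_succ _ _
  refine ⟨k, Z, C1, ?_, ?_, ?_, ?_, ?_⟩
  · intro a b g hg
    by_cases hak : a = k
    · subst hak
      rw [hupk, hIk] at hg
      rcases mem_union.1 hg with h' | h'
      · exact C2 a b g h'
      · rw [hedge_eq g h']
        exact hBtop b
    · rw [hupne a hak] at hg
      exact C2 a b g hg
  · intro a
    by_cases hak : a = k
    · subst hak
      rw [hupk]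
      have hsub : internalSet (fun h => v a h / s a h) (τ a) ∪
            edgeSet (fun h => v a h / s a h) (τ a)
          ⊆ internalSet (fun h => v a h / s a h) (τ a + 1) ∪
            edgeSet (fun h => v a h / s a h) (τ a + 1) := by
        intro x hx
        exact mem_union_left _ (by rw [hIk]; exact hx)
      have hzero : ∀ x ∈ internalSet (fun h => v a h / s a h) (τ a + 1) ∪
            edgeSet (fun h => v a h / s a h) (τ a + 1),
          x ∉ internalSet (fun h => v a h / s a h) (τ a) ∪
            edgeSet (fun h => v a h / s a h) (τ a) → Z a x * s a x = 0 :=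
        fun x _ hx => by rw [C5 a x hx, zero_mul]
      have heq := Finset.sum_subset hsub hzero
      rw [← heq]
      exact C3 a
    · rw [hupne a hak]; exact C3 a
  · intro g hg
    obtain ⟨a, ha⟩ := hg
    by_cases hak : a = k
    · subst hak
      rw [hupk, hIk] at ha
      rcases mem_union.1 ha with h' | h'
      · exact C4 g ⟨a, h'⟩
      · rw [hedge_eq g h']; exact hA
    · rw [hupne a hak] at ha
      exact C4 g ⟨a, ha⟩
  · intro a h hh
    by_cases hak : a = k
    · subst hak
      rw [hupk] at hh
      apply C5 a h
      intro hmem'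
      apply hh
      rw [hIk]
      exact mem_union_left _ hmem'
    · rw [hupne a hak] at hh
      exact C5 a h hh
  · intro h hh
    apply C6 h
    intro a
    have hha := hh a
    by_cases hak : a = k
    · subst hak
      rw [hupk, hIk] at hha
      intro hmem'
      exact hha (mem_union_left _ hmem')
    · rw [hupne a hak] at hha
      exact hha
end

section
/- For every fair division instance with indivisible goods and generalized assignment constraints, an FEFx allocation exists: there is a feasible allocation (A_1,...,A_n) of pairwise disjoint bundles (with remaining goods in charity C) such that for every pair of agents a, b, every strict subset S ⊊ A_b with s_a(S) ≤ B_a satisfies v_a(A_a) ≥ v_a(S), and for every strict subset S ⊊ C with s_a(S) ≤ B_a, v_a(A_a) ≥ v_a(S). -/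
open Finset
open scoped BigOperators

private def good (n m : ℕ) (v s : Fin n → Fin m → ℕ) (B : Fin n → ℕ)
    (A : Fin n → Finset (Fin m)) : Prop :=
  (∀ a b : Fin n, a ≠ b → Disjoint (A a) (A b)) ∧
  (∀ a, ∑ g ∈ A a, s a g ≤ B a) ∧
  (∀ a b : Fin n, ∀ S ⊂ A b, ∑ g ∈ S, s a g ≤ B a →
      ∑ g ∈ S, v a g ≤ ∑ g ∈ A a, v a g)

private lemma step (n m : ℕ) (v s : Fin n → Fin m → ℕ) (B : Fin n → ℕ)
    (A : Fin n → Finset (Fin m)) (hA : good n m v s B A)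
    (hfail : ¬ (∀ a : Fin n, ∀ S ⊂ (Finset.univ \ Finset.univ.biUnion A),
        ∑ g ∈ S, s a g ≤ B a → ∑ g ∈ S, v a g ≤ ∑ g ∈ A a, v a g)) :
    ∃ A', good n m v s B A' ∧
      ∑ a, ∑ g ∈ A a, v a g < ∑ a, ∑ g ∈ A' a, v a g := by
  classical
  obtain ⟨hD, hF, hE⟩ := hA
  set C : Finset (Fin m) := Finset.univ \ Finset.univ.biUnion A with hC
  push_neg at hfail
  obtain ⟨a0, S0, hS0C, hS0s, hS0v⟩ := hfail
  set V : Finset (Finset (Fin m)) :=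
    C.powerset.filter (fun S => S ⊂ C ∧
      ∃ x : Fin n, ∑ g ∈ S, s x g ≤ B x ∧ ∑ g ∈ A x, v x g < ∑ g ∈ S, v x g) with hV
  have hS0V : S0 ∈ V := by
    rw [hV, mem_filter, mem_powerset]
    exact ⟨hS0C.subset, hS0C, a0, hS0s, hS0v⟩
  obtain ⟨S, hSV, hmin⟩ := V.exists_min_image Finset.card ⟨S0, hS0V⟩
  rw [hV, mem_filter] at hSV
  obtain ⟨-, hSC, x, hxs, hxv⟩ := hSV
  -- S is disjoint from every bundle
  have hSdis : ∀ b, Disjoint S (A b) := by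
    intro b
    rw [Finset.disjoint_left]
    intro g hg hgb
    have hgC : g ∈ C := hSC.subset hg
    rw [hC, mem_sdiff, mem_biUnion] at hgC
    exact hgC.2 ⟨b, mem_univ b, hgb⟩
  -- no strict subset of S is a violation
  have hminT : ∀ T ⊂ S, ∀ b : Fin n, ∑ g ∈ T, s b g ≤ B b →
      ∑ g ∈ T, v b g ≤ ∑ g ∈ A b, v b g := by
    intro T hTS b hTs
    by_contra hlt
    have hTC : T ⊂ C := hTS.trans hSC
    have hTV : T ∈ V := by
      rw [hV, mem_filter, mem_powerset]
      exact ⟨hTC.subset, hTC, b, hTs, Nat.lt_of_not_le hlt⟩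
    exact absurd (hmin T hTV) (Nat.not_le.mpr (card_lt_card hTS))
  refine ⟨Function.update A x S, ⟨?_, ?_, ?_⟩, ?_⟩
  · -- disjointness
    intro p q hpq
    rcases eq_or_ne p x with rfl | hp
    · rw [Function.update_self, Function.update_of_ne hpq.symm]
      exact hSdis q
    · rw [Function.update_of_ne hp]
      rcases eq_or_ne q x with rfl | hq
      · rw [Function.update_self]
        exact (hSdis p).symm
      · rw [Function.update_of_ne hq]
        exact hD p q hpq
  · -- feasibility
    intro a
    rcases eq_or_ne a x with rfl | ha
    · rw [Function.update_self]; exact hxs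
    · rw [Function.update_of_ne ha]; exact hF a
  · -- FEFx among agents
    intro a b T hT hTs
    rcases eq_or_ne b x with rfl | hb
    · rw [Function.update_self] at hT
      rcases eq_or_ne a b with rfl | hab
      · rw [Function.update_self]
        exact Finset.sum_le_sum_of_subset hT.subset
      · rw [Function.update_of_ne hab]
        exact hminT T hT a hTs
    · rw [Function.update_of_ne hb] at hT
      rcases eq_or_ne a x with rfl | ha
      · rw [Function.update_self]
        exact (hE a b T hT hTs).trans hxv.le
      · rw [Function.update_of_ne ha]
        exact hE a b T hT hTs
  · -- potential increases
    have key : ∀ W : Fin n → Finset (Fin m),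
        ∑ p, ∑ g ∈ W p, v p g
          = (∑ g ∈ W x, v x g) + ∑ p ∈ univ.erase x, ∑ g ∈ W p, v p g :=
      fun W => (Finset.add_sum_erase univ _ (mem_univ x)).symm
    rw [key A, key (Function.update A x S)]
    have htail : ∑ p ∈ univ.erase x, ∑ g ∈ Function.update A x S p, v p g
        = ∑ p ∈ univ.erase x, ∑ g ∈ A p, v p g := by
      refine Finset.sum_congr rfl fun p hp => ?_
      rw [Function.update_of_ne (Finset.ne_of_mem_erase hp)]
    rw [htail, Function.update_self]
    exact Nat.add_lt_add_right hxv _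

private lemma phi_le (n m : ℕ) (v : Fin n → Fin m → ℕ)
    (A : Fin n → Finset (Fin m)) :
    ∑ a, ∑ g ∈ A a, v a g ≤ ∑ a, ∑ g, v a g :=
  Finset.sum_le_sum fun a _ => Finset.sum_le_sum_of_subset (subset_univ _)

private lemma main (n m : ℕ) (v s : Fin n → Fin m → ℕ) (B : Fin n → ℕ) :
    ∀ k : ℕ, ∀ A : Fin n → Finset (Fin m), good n m v s B A →
      (∑ a, ∑ g, v a g) - (∑ a, ∑ g ∈ A a, v a g) ≤ k →
      ∃ A', good n m v s B A' ∧
        (∀ a : Fin n, ∀ S ⊂ (Finset.univ \ Finset.univ.biUnion A'),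
          ∑ g ∈ S, s a g ≤ B a → ∑ g ∈ S, v a g ≤ ∑ g ∈ A' a, v a g) := by
  intro k
  induction k with
  | zero =>
    intro A hA hk
    by_cases hc : (∀ a : Fin n, ∀ S ⊂ (Finset.univ \ Finset.univ.biUnion A),
        ∑ g ∈ S, s a g ≤ B a → ∑ g ∈ S, v a g ≤ ∑ g ∈ A a, v a g)
    · exact ⟨A, hA, hc⟩
    · obtain ⟨A', _, hlt⟩ := step n m v s B A hA hc
      have h1 := phi_le n m v A'
      omega
  | succ k ih =>
    intro A hA hk
    by_cases hc : (∀ a : Fin n, ∀ S ⊂ (Finset.univ \ Finset.univ.biUnion A),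
        ∑ g ∈ S, s a g ≤ B a → ∑ g ∈ S, v a g ≤ ∑ g ∈ A a, v a g)
    · exact ⟨A, hA, hc⟩
    · obtain ⟨A', hA', hlt⟩ := step n m v s B A hA hc
      exact ih A' hA' (by have := phi_le n m v A'; omega)

/-- Under generalized assignment constraints, an FEFx allocation of indivisible
goods (with charity) always exists. -/
theorem FEFx_exists
    (n m : ℕ) (v s : Fin n → Fin m → ℕ) (B : Fin n → ℕ) :
    ∃ A : Fin n → Finset (Fin m),
      -- pairwise disjoint bundles
      (∀ a b : Fin n, a ≠ b → Disjoint (A a) (A b)) ∧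
      -- feasibility: each bundle respects the agent's budget
      (∀ a, ∑ g ∈ A a, s a g ≤ B a) ∧
      -- FEFx among agents
      (∀ a b : Fin n, ∀ S ⊂ A b, ∑ g ∈ S, s a g ≤ B a →
        ∑ g ∈ S, v a g ≤ ∑ g ∈ A a, v a g) ∧
      -- FEFx against the charity
      (∀ a : Fin n, ∀ S ⊂ (Finset.univ \ Finset.univ.biUnion A),
        ∑ g ∈ S, s a g ≤ B a → ∑ g ∈ S, v a g ≤ ∑ g ∈ A a, v a g) := by
  have hgood : good n m v s B (fun _ => ∅) :=
    ⟨fun _ _ _ => Finset.disjoint_empty_left _,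
     fun a => by simp,
     fun a b S hS _ => absurd hS (Finset.not_ssubset_empty S)⟩
  obtain ⟨A', ⟨h1, h2, h3⟩, h4⟩ :=
    main n m v s B (∑ a, ∑ g, v a g) (fun _ => ∅) hgood (by simp)
  exact ⟨A', h1, h2, h3, h4⟩
end

section
/- If T is a minimal envied set with respect to an allocation A = (A_1,...,A_n), envied by agent k, then the updated allocation obtained by setting A_k := T (and leaving other bundles unchanged after returning A_k's old goods to charity) is feasible, strictly increases agent k's value (v_k(T) > v_k(A_k)), and preserves the FEFx property among all pairs of agents, provided A was FEFx among agents. -/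
open Finset
open scoped BigOperators

/-- Swapping in a minimal envied set preserves feasibility and FEFx among
agents, and strictly increases the envying agent's value. -/
theorem swap_minimal_envied_preserves_FEFx
    (n m : ℕ) (v s : Fin n → Fin m → ℕ) (B : Fin n → ℕ)
    (A : Fin n → Finset (Fin m)) (T : Finset (Fin m)) (k : Fin n)
    -- A is a feasible allocation and T lies in the charity
    (hfeas : ∀ a, ∑ g ∈ A a, s a g ≤ B a)
    (hdisj : ∀ a, Disjoint T (A a))
    -- T is a minimal envied set, envied by agent k
    (hTfeas : ∑ g ∈ T, s k g ≤ B k)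
    (hTenvy : ∑ g ∈ A k, v k g < ∑ g ∈ T, v k g)
    (hTmin : ∀ T' ⊂ T, ∀ a : Fin n, ∀ S ⊆ T', ∑ g ∈ S, s a g ≤ B a →
      ∑ g ∈ S, v a g ≤ ∑ g ∈ A a, v a g)
    -- A is FEFx among agents
    (hFEFx : ∀ a b : Fin n, ∀ S ⊂ A b, ∑ g ∈ S, s a g ≤ B a →
      ∑ g ∈ S, v a g ≤ ∑ g ∈ A a, v a g) :
    -- the updated allocation A' = A[k := T]
    (∀ a, ∑ g ∈ Function.update A k T a, s a g ≤ B a) ∧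
    (∑ g ∈ A k, v k g < ∑ g ∈ Function.update A k T k, v k g) ∧
    (∀ a b : Fin n, ∀ S ⊂ Function.update A k T b, ∑ g ∈ S, s a g ≤ B a →
      ∑ g ∈ S, v a g ≤ ∑ g ∈ Function.update A k T a, v a g) := by
  refine ⟨?_, ?_, ?_⟩
  · intro a
    by_cases h : a = k
    · subst h; simpa using hTfeas
    · simpa [Function.update_of_ne h] using hfeas a
  · simpa using hTenvy
  · intro a b S hS hSfeas
    have hle : ∑ g ∈ S, v a g ≤ ∑ g ∈ A a, v a g := by
      by_cases hb : b = k
      · subst hb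
        rw [Function.update_self] at hS
        exact hTmin S hS a S le_rfl hSfeas
      · rw [Function.update_of_ne hb] at hS
        exact hFEFx a b S hS hSfeas
    by_cases ha : a = k
    · subst ha
      rw [Function.update_self]
      exact hle.trans hTenvy.le
    · rwa [Function.update_of_ne ha]
end

section
/- If an allocation A is (1−ε)-FEFx among agents and agent k's bundle is replaced by a (1−ε)-minimal envied set T ⊆ charity, then the resulting allocation is again feasible and (1−ε)-FEFx among agents: for all pairs a, b and every strict subset S ⊊ A'_b with s_a(S) ≤ B_a, v_a(A'_a) ≥ (1−ε)·v_a(S). -/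
open Finset
open scoped BigOperators

/-- Swapping in a (1-ε)-minimal envied set preserves feasibility and
(1-ε)-FEFx among agents. -/
theorem apx_swap_preserves_FEFx
    (n m : ℕ) (v s : Fin n → Fin m → ℝ) (B : Fin n → ℝ)
    (hv : ∀ a g, 0 ≤ v a g) (hs : ∀ a g, 0 ≤ s a g)
    (ε : ℝ) (hε0 : 0 < ε) (hε1 : ε ≤ 1)
    (A : Fin n → Finset (Fin m)) (T : Finset (Fin m)) (k : Fin n)
    -- A is a feasible allocation and T lies in the charity
    (hfeas : ∀ a, ∑ g ∈ A a, s a g ≤ B a)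
    (hdisj : ∀ a, Disjoint T (A a))
    -- T is a (1-ε)-minimal envied set, (1-ε/2)-envied by agent k
    (hTfeas : ∑ g ∈ T, s k g ≤ B k)
    (hTenvy : ∑ g ∈ A k, v k g < (1 - ε/2) * ∑ g ∈ T, v k g)
    (hTmin : ∀ T' ⊂ T, ∀ a : Fin n, ∀ S ⊆ T', ∑ g ∈ S, s a g ≤ B a →
      (1 - ε) * ∑ g ∈ S, v a g ≤ ∑ g ∈ A a, v a g)
    -- A is (1-ε)-FEFx among agents
    (hFEFx : ∀ a b : Fin n, ∀ S ⊂ A b, ∑ g ∈ S, s a g ≤ B a →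
      (1 - ε) * ∑ g ∈ S, v a g ≤ ∑ g ∈ A a, v a g) :
    -- the updated allocation A' = A[k := T] is feasible and (1-ε)-FEFx
    (∀ a, ∑ g ∈ Function.update A k T a, s a g ≤ B a) ∧
    (∀ a b : Fin n, ∀ S ⊂ Function.update A k T b, ∑ g ∈ S, s a g ≤ B a →
      (1 - ε) * ∑ g ∈ S, v a g ≤ ∑ g ∈ Function.update A k T a, v a g) := by
  have hTv : (0:ℝ) ≤ ∑ g ∈ T, v k g := Finset.sum_nonneg fun g _ => hv k g
  have hAkT : ∑ g ∈ A k, v k g ≤ ∑ g ∈ T, v k g := by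
    calc ∑ g ∈ A k, v k g ≤ (1 - ε/2) * ∑ g ∈ T, v k g := le_of_lt hTenvy
      _ ≤ 1 * ∑ g ∈ T, v k g := by nlinarith
      _ = ∑ g ∈ T, v k g := one_mul _
  constructor
  · intro a
    rcases eq_or_ne a k with rfl | hak
    · simpa using hTfeas
    · simpa [Function.update_of_ne hak] using hfeas a
  · intro a b S hS hSfeas
    rcases eq_or_ne b k with hbk | hbk
    · rw [hbk, Function.update_self] at hS
      have h1 : (1 - ε) * ∑ g ∈ S, v a g ≤ ∑ g ∈ A a, v a g :=
        hTmin S hS a S (le_refl S) hSfeas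
      rcases eq_or_ne a k with rfl | hak
      · rw [Function.update_self]
        linarith
      · rwa [Function.update_of_ne hak]
    · rw [Function.update_of_ne hbk] at hS
      have h1 : (1 - ε) * ∑ g ∈ S, v a g ≤ ∑ g ∈ A a, v a g :=
        hFEFx a b S hS hSfeas
      rcases eq_or_ne a k with rfl | hak
      · rw [Function.update_self]
        linarith
      · rwa [Function.update_of_ne hak]
end

section
/- In the NP-hardness gadget instance F(μ) with a single agent and m+2 goods, any FEFx allocation assigns to the agent either a subset of the first m goods (when μ ≤ v*/2 − 1) or exactly the singleton {m+1} (when μ ≥ v*/2); consequently, the agent's value in an FEFx allocation is even in the first case and odd (equal to 2μ+1) in the second, where v* is the optimal knapsack value and all item values are even integers. -/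
open Finset
open scoped BigOperators Classical

set_option maxHeartbeats 2000000 in
/-- NP-hardness gadget: in the single-agent instance F(μ) with m+2 goods, any
FEFx allocation gives the agent either a subset of the first m goods (when
2μ+2 ≤ v*), with even value, or exactly the singleton {good m+1} (when
v* ≤ 2μ), with odd value 2μ+1. -/
theorem FEFx_gadget_parity
    (m μ W : ℕ) (V S : Fin (m+2) → ℕ)
    -- the first m goods are the knapsack items: even values, positive weights
    (heven : ∀ g : Fin (m+2), (g : ℕ) < m → Even (V g))
    (hwpos : ∀ g : Fin (m+2), (g : ℕ) < m → 0 < S g)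
    -- good m+1 has value 2μ+1 and size W
    (hVM : V ⟨m, by omega⟩ = 2*μ + 1) (hSM : S ⟨m, by omega⟩ = W)
    -- good m+2 has value 0 and size W+1
    (hVL : V ⟨m+1, by omega⟩ = 0) (hSL : S ⟨m+1, by omega⟩ = W + 1)
    -- v* is the optimal knapsack value over the items
    (vstar : ℕ)
    (hvstar : vstar =
      (((Finset.univ.filter (fun g : Fin (m+2) => (g : ℕ) < m)).powerset).filter
        (fun T => ∑ g ∈ T, S g ≤ W)).sup (fun T => ∑ g ∈ T, V g))
    -- A is the agent's bundle in an FEFx allocation (budget B₁ = W)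
    (A : Finset (Fin (m+2))) (hA : ∑ g ∈ A, S g ≤ W)
    (hFEFx : ∀ T ⊂ (Finset.univ \ A), ∑ g ∈ T, S g ≤ W →
      ∑ g ∈ T, V g ≤ ∑ g ∈ A, V g) :
    (2*μ + 2 ≤ vstar → (∀ g ∈ A, (g : ℕ) < m) ∧ Even (∑ g ∈ A, V g)) ∧
    (vstar ≤ 2*μ → A = {(⟨m, by omega⟩ : Fin (m+2))} ∧ ∑ g ∈ A, V g = 2*μ + 1) := by
  classical
  let gM : Fin (m+2) := ⟨m, by omega⟩
  let gL : Fin (m+2) := ⟨m+1, by omega⟩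
  have hvM : (gM : ℕ) = m := rfl
  have hvL : (gL : ℕ) = m + 1 := rfl
  have hVM' : V gM = 2*μ + 1 := hVM
  have hSM' : S gM = W := hSM
  have hVL' : V gL = 0 := hVL
  have hSL' : S gL = W + 1 := hSL
  -- gL cannot be in A
  have hLnotA : gL ∉ A := by
    intro h
    have := Finset.single_le_sum (f := S) (fun i _ => Nat.zero_le _) h
    omega
  -- trichotomy for g
  have htri : ∀ g : Fin (m+2), (g : ℕ) < m ∨ g = gM ∨ g = gL := by
    intro g
    rcases Nat.lt_or_ge (g : ℕ) m with h | h
    · exact Or.inl h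
    · have hg2 := g.isLt
      rcases Nat.lt_or_ge (g : ℕ) (m+1) with h' | h'
      · exact Or.inr (Or.inl (Fin.ext (by omega)))
      · exact Or.inr (Or.inr (Fin.ext (by omega)))
  have hMneL : gM ≠ gL := by
    intro h
    have := congrArg Fin.val h
    rw [hvM, hvL] at this
    omega
  -- if gM ∈ A then A = {gM}
  have hAonly : gM ∈ A → A = {gM} := by
    intro hmem
    apply Finset.eq_singleton_iff_unique_mem.mpr
    refine ⟨hmem, ?_⟩
    intro g hg
    by_contra hne
    have hne' : gM ≠ g := fun h => hne h.symm
    have hsub : ({gM, g} : Finset (Fin (m+2))) ⊆ A := by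
      intro x hx
      simp only [Finset.mem_insert, Finset.mem_singleton] at hx
      rcases hx with h | h <;> (subst h; assumption)
    have hsum : S gM + S g ≤ ∑ g ∈ A, S g := by
      have := Finset.sum_le_sum_of_subset (f := S) hsub
      rwa [Finset.sum_pair hne'] at this
    rcases htri g with h | h | h
    · have := hwpos g h; omega
    · exact hne h
    · exact hLnotA (h ▸ hg)
  constructor
  · -- case 2μ+2 ≤ vstar
    intro hge
    have hMnotA : gM ∉ A := by
      intro hmem
      have hAeq := hAonly hmem
      have hsup : vstar ≤ 2*μ + 1 := by
        rw [hvstar]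
        apply Finset.sup_le
        intro T hT
        rw [Finset.mem_filter, Finset.mem_powerset] at hT
        have hTitems : ∀ g ∈ T, (g : ℕ) < m := by
          intro g hg
          have := hT.1 hg
          simpa using this
        have hss : T ⊂ Finset.univ \ A := by
          have hsub : T ⊆ Finset.univ \ A := by
            intro g hg
            rw [Finset.mem_sdiff]
            refine ⟨Finset.mem_univ _, ?_⟩
            rw [hAeq, Finset.mem_singleton]
            intro h
            have h2 := hTitems g hg
            rw [h, hvM] at h2
            omega
          rw [Finset.ssubset_iff_of_subset hsub]
          refine ⟨gL, ?_, ?_⟩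
          · rw [Finset.mem_sdiff]
            refine ⟨Finset.mem_univ _, ?_⟩
            rw [hAeq, Finset.mem_singleton]
            exact fun h => hMneL h.symm
          · intro h
            have h2 := hTitems gL h
            rw [hvL] at h2
            omega
        have := hFEFx T hss hT.2
        rw [hAeq, Finset.sum_singleton, hVM'] at this
        exact this
      omega
    have hitems : ∀ g ∈ A, (g : ℕ) < m := by
      intro g hg
      rcases htri g with h | h | h
      · exact h
      · exact absurd (h ▸ hg) hMnotA
      · exact absurd (h ▸ hg) hLnotA
    refine ⟨hitems, ?_⟩
    have h2 : (2:ℕ) ∣ ∑ g ∈ A, V g :=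
      Finset.dvd_sum (fun g hg => (heven g (hitems g hg)).two_dvd)
    exact even_iff_two_dvd.mpr h2
  · -- case vstar ≤ 2μ
    intro hle
    have hMmem : gM ∈ A := by
      by_contra hM
      have hitems : ∀ g ∈ A, (g : ℕ) < m := by
        intro g hg
        rcases htri g with h | h | h
        · exact h
        · exact absurd (h ▸ hg) hM
        · exact absurd (h ▸ hg) hLnotA
      have hAval : ∑ g ∈ A, V g ≤ vstar := by
        rw [hvstar]
        apply Finset.le_sup (f := fun T => ∑ g ∈ T, V g)
        rw [Finset.mem_filter, Finset.mem_powerset]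
        exact ⟨fun g hg => by simp [hitems g hg], hA⟩
      have hss : ({gM} : Finset (Fin (m+2))) ⊂ Finset.univ \ A := by
        have hsub : ({gM} : Finset (Fin (m+2))) ⊆ Finset.univ \ A := by
          intro x hx
          rw [Finset.mem_singleton] at hx
          subst hx
          rw [Finset.mem_sdiff]
          exact ⟨Finset.mem_univ _, hM⟩
        rw [Finset.ssubset_iff_of_subset hsub]
        refine ⟨gL, ?_, ?_⟩
        · rw [Finset.mem_sdiff]
          exact ⟨Finset.mem_univ _, hLnotA⟩
        · rw [Finset.mem_singleton]
          exact fun h => hMneL h.symm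
      have := hFEFx {gM} hss (by rw [Finset.sum_singleton, hSM'])
      rw [Finset.sum_singleton, hVM'] at this
      omega
    have hAeq := hAonly hMmem
    exact ⟨hAeq, by rw [hAeq, Finset.sum_singleton, hVM']⟩
end
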